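/- For every natural number n, the monic Jacobi polynomial P̂_n^{(α,β)} satisfies L P̂_n^{(α,β)} = −n(n+α+β+1)·P̂_n^{(α,β)} in ℝ[x]. -/

import Mathlib

open Polynomial

/-- The Pochhammer symbol `(c)_k = c(c+1)⋯(c+k-1)` for a real `c`. -/
noncomputable def poch (c : ℝ) (k : ℕ) : ℝ := ∏ i ∈ Finset.range k, (c + i)

/-- The hypergeometric operator `L` on `ℝ[x]`. -/
noncomputable def Lop (α β : ℝ) (p : ℝ[X]) : ℝ[X] :=
  X * (1 - X) * derivative (derivative p) + (C (α + 1) - C (α + β + 2) * X) * derivative p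

/-- The monic Jacobi polynomial
`P̂_n^{(a,b)}(x) = ((-1)^n (a+1)_n / (a+b+n+1)_n) Σ_{k=0}^n
  [(-n)_k (n+a+b+1)_k / ((a+1)_k k!)] x^k` as an element of `ℝ[x]`. -/
noncomputable def monicJacobiPoly (a b : ℝ) (n : ℕ) : ℝ[X] :=
  C ((-1) ^ n * poch (a + 1) n / poch (a + b + n + 1) n) *
    ∑ k ∈ Finset.range (n + 1),
      C (poch (-(n : ℝ)) k * poch ((n : ℝ) + a + b + 1) k /
          (poch (a + 1) k * (Nat.factorial k : ℝ))) * X ^ k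

lemma poch_succ (c : ℝ) (k : ℕ) : poch c (k+1) = poch c k * (c + k) :=
  Finset.prod_range_succ _ _

lemma poch_pos {c : ℝ} (hc : 0 < c) (k : ℕ) : 0 < poch c k :=
  Finset.prod_pos fun i _ => by positivity

/-- The coefficient sequence of the hypergeometric sum. -/
noncomputable def jc (α β : ℝ) (n k : ℕ) : ℝ :=
  poch (-(n : ℝ)) k * poch ((n : ℝ) + α + β + 1) k /
    (poch (α + 1) k * (Nat.factorial k : ℝ))

lemma jc_rec (α β : ℝ) (hα : -1 < α) (n k : ℕ) :
    jc α β n (k+1) * (((k:ℝ)+1) * ((k:ℝ)+1+α)) =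
      jc α β n k * (((k:ℝ) - n) * ((n:ℝ) + k + α + β + 1)) := by
  have h1 : (0:ℝ) < α + 1 := by linarith
  have h2 : poch (α+1) k ≠ 0 := ne_of_gt (poch_pos h1 k)
  have h3 : (Nat.factorial k : ℝ) ≠ 0 := Nat.cast_ne_zero.mpr (Nat.factorial_ne_zero k)
  have h4 : α + 1 + (k:ℝ) ≠ 0 := by positivity
  have h5 : ((k:ℝ) + 1) ≠ 0 := by positivity
  simp only [jc, poch_succ, Nat.factorial_succ, Nat.cast_mul, Nat.cast_add, Nat.cast_one]
  field_simp
  ring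

lemma Lop_zero (α β : ℝ) : Lop α β (0 : ℝ[X]) = 0 := by simp [Lop]

lemma Lop_add (α β : ℝ) (p q : ℝ[X]) : Lop α β (p + q) = Lop α β p + Lop α β q := by
  simp only [Lop, derivative_add]; ring

lemma Lop_C_mul (α β r : ℝ) (p : ℝ[X]) : Lop α β (C r * p) = C r * Lop α β p := by
  simp only [Lop, derivative_C_mul]; ring

lemma Lop_sum (α β : ℝ) (s : Finset ℕ) (f : ℕ → ℝ[X]) :
    Lop α β (∑ k ∈ s, f k) = ∑ k ∈ s, Lop α β (f k) := by
  classical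
  induction s using Finset.induction_on with
  | empty => simp [Lop_zero]
  | insert _ _ h ih => rw [Finset.sum_insert h, Finset.sum_insert h, Lop_add, ih]

lemma Lop_X_pow_succ (α β : ℝ) (k : ℕ) :
    Lop α β (X ^ (k+1) : ℝ[X]) =
      C (((k:ℝ)+1) * ((k:ℝ)+1+α)) * X ^ k
        - C (((k:ℝ)+1) * ((k:ℝ)+1+α+β+1)) * X ^ (k+1) := by
  cases k with
  | zero =>
    simp only [Lop, zero_add, pow_one, derivative_X, derivative_one, mul_zero, mul_one,
      zero_mul, add_zero]
    push_cast [C_eq_natCast, C_add, C_mul, C_1, C_0, map_ofNat]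
    ring
  | succ k =>
    simp only [Lop, derivative_X_pow, derivative_C_mul, Nat.add_sub_cancel]
    push_cast [C_eq_natCast, C_add, C_mul, C_1, C_0, map_ofNat]
    ring

lemma Lop_X_pow (α β : ℝ) (k : ℕ) :
    Lop α β (X ^ k : ℝ[X]) =
      C ((k:ℝ) * ((k:ℝ)+α)) * X ^ (k-1) - C ((k:ℝ) * ((k:ℝ)+α+β+1)) * X ^ k := by
  cases k with
  | zero => simp [Lop]
  | succ k =>
    rw [Lop_X_pow_succ, Nat.add_sub_cancel]
    push_cast
    ring_nf

/-- The monic Jacobi polynomials are eigenfunctions of the hypergeometric operator: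
`L P̂_n^{(α,β)} = -n(n+α+β+1) P̂_n^{(α,β)}`. -/
theorem L_jacobi_eigen (α β : ℝ) (hα : -1 < α) (hβ : -1 < β) (n : ℕ) :
    Lop α β (monicJacobiPoly α β n) =
      (-(n : ℝ) * ((n : ℝ) + α + β + 1)) • monicJacobiPoly α β n := by
  set lam : ℝ := -(n : ℝ) * ((n : ℝ) + α + β + 1) with hlam
  set q : ℝ[X] := ∑ k ∈ Finset.range (n + 1), C (jc α β n k) * X ^ k with hq
  have hmj : monicJacobiPoly α β n =
      C ((-1) ^ n * poch (α + 1) n / poch (α + β + n + 1) n) * q := by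
    rw [monicJacobiPoly, hq]; rfl
  have main : Lop α β q = C lam * q := by
    rw [hq, Lop_sum]
    -- rewrite each term
    have step : ∀ k, C (jc α β n k) * Lop α β (X ^ k : ℝ[X]) =
        C (jc α β n k * ((k:ℝ) * ((k:ℝ)+α))) * X ^ (k-1)
          - C (jc α β n k * ((k:ℝ) * ((k:ℝ)+α+β+1))) * X ^ k := by
      intro k
      rw [Lop_X_pow, mul_sub, ← mul_assoc, ← mul_assoc, ← C_mul, ← C_mul]
    calc (∑ k ∈ Finset.range (n+1), Lop α β (C (jc α β n k) * X ^ k))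
        = ∑ k ∈ Finset.range (n+1),
            (C (jc α β n k * ((k:ℝ) * ((k:ℝ)+α))) * X ^ (k-1)
              - C (jc α β n k * ((k:ℝ) * ((k:ℝ)+α+β+1))) * X ^ k) := by
          refine Finset.sum_congr rfl fun k _ => ?_
          rw [Lop_C_mul, step]
      _ = (∑ k ∈ Finset.range (n+1), C (jc α β n k * ((k:ℝ) * ((k:ℝ)+α))) * X ^ (k-1))
            - ∑ k ∈ Finset.range (n+1), C (jc α β n k * ((k:ℝ) * ((k:ℝ)+α+β+1))) * X ^ k := by
          rw [Finset.sum_sub_distrib]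
      _ = (∑ k ∈ Finset.range (n+1),
            C (jc α β n (k+1) * (((k:ℝ)+1) * (((k:ℝ)+1)+α))) * X ^ k)
            - ∑ k ∈ Finset.range (n+1), C (jc α β n k * ((k:ℝ) * ((k:ℝ)+α+β+1))) * X ^ k := by
          congr 1
          rw [Finset.sum_range_succ' (fun k => C (jc α β n k * ((k:ℝ) * ((k:ℝ)+α))) * X ^ (k-1))]
          rw [Finset.sum_range_succ
            (fun k => C (jc α β n (k+1) * (((k:ℝ)+1) * (((k:ℝ)+1)+α))) * X ^ k)]
          have hz : jc α β n 0 * ((0:ℝ) * ((0:ℝ)+α)) = 0 := by ring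
          have hz2 : jc α β n (n+1) * (((n:ℝ)+1) * (((n:ℝ)+1)+α)) = 0 := by
            have := jc_rec α β hα n n
            push_cast at this ⊢
            rw [show ((n:ℝ)+1) * (((n:ℝ)+1)+α) = ((n:ℝ)+1) * ((n:ℝ)+1+α) by ring, this]
            ring
          simp only [Nat.cast_zero, hz, C_0, zero_mul, mul_zero, add_zero, hz2]
          refine Finset.sum_congr rfl fun k _ => ?_
          rw [Nat.add_sub_cancel]
          congr 1
          push_cast
          ring
      _ = ∑ k ∈ Finset.range (n+1), C (lam * jc α β n k) * X ^ k := by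
          rw [← Finset.sum_sub_distrib]
          refine Finset.sum_congr rfl fun k _ => ?_
          rw [← sub_mul, ← C_sub]
          congr 2
          have := jc_rec α β hα n k
          rw [show jc α β n (k+1) * (((k:ℝ)+1) * (((k:ℝ)+1)+α))
              = jc α β n (k+1) * (((k:ℝ)+1) * ((k:ℝ)+1+α)) by ring, this, hlam]
          ring
      _ = C lam * ∑ k ∈ Finset.range (n+1), C (jc α β n k) * X ^ k := by
          rw [Finset.mul_sum]
          refine Finset.sum_congr rfl fun k _ => ?_
          rw [← mul_assoc, ← C_mul]
  rw [hmj, Lop_C_mul, main, smul_eq_C_mul]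
  ring
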